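/- Let ρ : ℝⁿ → [0,∞] be a radial kernel satisfying (H0), and define Q_ρ(x) = ∫_{|x|}^∞ ρ̄(t)/t dt for x ≠ 0. Then: (i) Q_ρ ∈ L¹(B_b) for every b > 0; (ii) for every M > 0 there is a constant C = C(n,M) > 0 with |Q_ρ(x)| ≤ C / |x|^{n−1} whenever |x| ≥ M; (iii) if ρ ∈ L¹(ℝⁿ) then Q_ρ ∈ L¹(ℝⁿ), and if moreover ρ has compact support then Q_ρ has compact support. -/

import Mathlib

open MeasureTheory Filter
open scoped ENNReal Topology

noncomputable section

abbrev Eucl (n : ℕ) := EuclideanSpace ℝ (Fin n)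

/-- The nonlocal gradient `𝒢_ρ u`. -/
def nlGrad {n : ℕ} (ρ : Eucl n → ℝ) (u : Eucl n → ℝ) (x : Eucl n) : Eucl n :=
  ∫ y, ((u x - u y) * ρ (x - y) / ‖x - y‖ ^ 2) • (x - y)

/-- The nonlocal divergence `div_ρ Φ`. -/
def nlDiv {n : ℕ} (ρ : Eucl n → ℝ) (Φ : Eucl n → Eucl n) (x : Eucl n) : ℝ :=
  ∫ y, ((inner ℝ (Φ x - Φ y) (x - y) : ℝ) / ‖x - y‖ ^ 2) * ρ (x - y)

/-- `G` is the weak (distributional) nonlocal gradient `D_ρ u` of `u`. -/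
def IsWeakNlGrad {n : ℕ} (ρ : Eucl n → ℝ) (u : Eucl n → ℝ) (G : Eucl n → Eucl n) : Prop :=
  ∀ Φ : Eucl n → Eucl n, ContDiff ℝ (⊤ : ℕ∞) Φ → HasCompactSupport Φ →
    (∫ x, (inner ℝ (G x) (Φ x) : ℝ)) = - ∫ x, u x * nlDiv ρ Φ x

/-- `G` is the classical weak gradient of `u`. -/
def IsWeakGrad {n : ℕ} (u : Eucl n → ℝ) (G : Eucl n → Eucl n) : Prop :=
  ∀ φ : Eucl n → ℝ, ContDiff ℝ (⊤ : ℕ∞) φ → HasCompactSupport φ →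
    (∫ x, u x • gradient φ x) = - ∫ x, φ x • G x

/-- Hypothesis (H0) on the radial kernel `ρ` with radial representation `ρb`. -/
structure H0 (n : ℕ) (ρ : Eucl n → ℝ) (ρb : ℝ → ℝ) (ε : ℝ) : Prop where
  nonneg : ∀ x, 0 ≤ ρ x
  radial : ∀ x, ρ x = ρb ‖x‖
  locInt : LocallyIntegrable ρ
  intMin : Integrable fun x : Eucl n => min 1 ‖x‖⁻¹ * ρ x
  eps_pos : 0 < ε
  inf_pos : ∃ c > 0, ∀ x ∈ Metric.ball (0 : Eucl n) ε, c ≤ ρ x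

/-- `f_ρ(t) = t^(n-2) ρ̄(t)`. -/
def frho (n : ℕ) (ρb : ℝ → ℝ) (t : ℝ) : ℝ := t ^ ((n : ℝ) - 2) * ρb t

/-- Hypothesis (H1). -/
structure H1 (n : ℕ) (ρb : ℝ → ℝ) (ε : ℝ) : Prop where
  anti : AntitoneOn (frho n ρb) (Set.Ioi 0)
  doubling : ∃ μ, 0 < μ ∧ μ < 1 ∧ ∀ t, 0 < t → t < ε → frho n ρb t ≤ μ * frho n ρb (t / 2)

/-- Hypothesis (H2). -/
structure H2 (n : ℕ) (ρb : ℝ → ℝ) (ε : ℝ) : Prop where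
  smooth : ContDiffOn ℝ (⊤ : ℕ∞) (frho n ρb) (Set.Ioi 0)
  first : ∃ C > 0, ∀ t, 0 < t → t < ε → frho n ρb t / t ≤ -C * deriv (frho n ρb) t
  higher : ∀ k : ℕ, ∃ C > 0, ∀ t, 0 < t → t < ε →
    |iteratedDeriv k (frho n ρb) t| ≤ C * frho n ρb t / t ^ k

def AlmostDecreasingOn (f : ℝ → ℝ) (s : Set ℝ) : Prop :=
  ∃ C > 0, ∀ x₁ ∈ s, ∀ x₂ ∈ s, x₁ ≤ x₂ → f x₂ ≤ C * f x₁

def AlmostIncreasingOn (f : ℝ → ℝ) (s : Set ℝ) : Prop :=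
  ∃ C > 0, ∀ x₁ ∈ s, ∀ x₂ ∈ s, x₁ ≤ x₂ → f x₁ ≤ C * f x₂

/-- Hypothesis (H3), with exponent `σ`. -/
def H3 (n : ℕ) (ρb : ℝ → ℝ) (ε σ : ℝ) : Prop :=
  0 < σ ∧ σ < 1 ∧
    AlmostDecreasingOn (fun t => t ^ ((n : ℝ) + σ - 1) * ρb t) (Set.Ioo 0 ε)

/-- Hypothesis (H4), with exponent `γ`. -/
def H4 (n : ℕ) (ρb : ℝ → ℝ) (ε γ : ℝ) : Prop :=
  0 < γ ∧ γ < 1 ∧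
    AlmostIncreasingOn (fun t => t ^ ((n : ℝ) + γ - 1) * ρb t) (Set.Ioo 0 ε)

/-- The potential `Q_ρ(x) = ∫_{|x|}^∞ ρ̄(t)/t dt`. -/
def Qker (n : ℕ) (ρb : ℝ → ℝ) (x : Eucl n) : ℝ := ∫ t in Set.Ioi ‖x‖, ρb t / t

/-- The Fourier transform `f̂(ξ) = ∫ f(x) e^{-2πi x·ξ} dx`. -/
def ft {n : ℕ} (f : Eucl n → ℂ) (ξ : Eucl n) : ℂ :=
  ∫ x, Complex.exp ((((-(2 * Real.pi * (inner ℝ x ξ : ℝ))) : ℝ) : ℂ) * Complex.I) * f x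

/-- The `j`-th component of the multiplier `λ_ρ(ξ)`. -/
def lambdaRho {n : ℕ} (ρ : Eucl n → ℝ) (ξ : Eucl n) (j : Fin n) : ℂ :=
  ∫ x, ((ρ x * x j / ‖x‖ ^ 2 : ℝ) : ℂ) *
    (Complex.exp ((((2 * Real.pi * (inner ℝ ξ x : ℝ)) : ℝ) : ℂ) * Complex.I) - 1)

/-- The modulus `ω(t) = (t^(n-1) ρ̄(t))⁻¹`, with `ω(0)=0`. -/
def omegaF (n : ℕ) (ρb : ℝ → ℝ) (t : ℝ) : ℝ :=
  if t ≤ 0 then 0 else (t ^ ((n : ℝ) - 1) * ρb t)⁻¹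

/-- The modulus of continuity `ω_α`. -/
def omegaAlphaF (n : ℕ) (ρb : ℝ → ℝ) (ε α t : ℝ) : ℝ :=
  if t ≤ 0 then 0 else if t < ε then omegaF n ρb t * t ^ (-α) else omegaF n ρb ε * ε ^ (-α)

/-- The commutator `K_f(g)`. -/
def KfOp {n : ℕ} (ρ : Eucl n → ℝ) (f g : Eucl n → ℝ) (x : Eucl n) : Eucl n :=
  ∫ y, ((f x - f y) * g y * ρ (x - y) / ‖x - y‖ ^ 2) • (x - y)



section AuxLemmas
open Set Metric

variable {n : ℕ}

lemma eucl_nontrivial (hn : 1 ≤ n) : Nontrivial (Eucl n) := by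
  have : Module.finrank ℝ (Eucl n) = n := finrank_euclideanSpace_fin
  exact Module.nontrivial_of_finrank_pos (R := ℝ) (by omega : 0 < Module.finrank ℝ (Eucl n))

lemma lintegral_norm_polar (hn : 1 ≤ n) (f : ℝ → ℝ≥0∞) (hf : Measurable f) :
    ∫⁻ x : Eucl n, f ‖x‖ =
      (volume : Measure (Eucl n)).toSphere Set.univ *
        ∫⁻ t in Set.Ioi (0:ℝ), ENNReal.ofReal (t ^ (n-1)) * f t := by
  haveI := eucl_nontrivial hn
  have hdim : Module.finrank ℝ (Eucl n) = n := finrank_euclideanSpace_fin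
  calc
    ∫⁻ x : Eucl n, f ‖x‖ = ∫⁻ x in ({0}ᶜ : Set (Eucl n)), f ‖x‖ := by
      rw [MeasureTheory.restrict_compl_singleton]
    _ = ∫⁻ x : ({0}ᶜ : Set (Eucl n)), f ‖x.1‖ ∂((volume : Measure (Eucl n)).comap (↑)) :=
      (lintegral_subtype_comap (measurableSet_singleton _).compl (fun a => f ‖a‖)).symm
    _ = ∫⁻ p : sphere (0 : Eucl n) 1 × Set.Ioi (0:ℝ), f p.2.1
          ∂((volume : Measure (Eucl n)).toSphere.prod
            (Measure.volumeIoiPow (Module.finrank ℝ (Eucl n) - 1))) := by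
      have := (Measure.measurePreserving_homeomorphUnitSphereProd
        (volume : Measure (Eucl n))).lintegral_comp_emb
        (Homeomorph.measurableEmbedding _) (fun p => f p.2.1)
      simpa only [homeomorphUnitSphereProd_apply_snd_coe] using this
    _ = (volume : Measure (Eucl n)).toSphere Set.univ *
          ∫⁻ t : Set.Ioi (0:ℝ), f t.1 ∂(Measure.volumeIoiPow (Module.finrank ℝ (Eucl n) - 1)) := by
      rw [← lintegral_map (f := fun t : Set.Ioi (0:ℝ) => f t.1) (by fun_prop) measurable_snd,
        Measure.map_snd_prod, lintegral_smul_measure, smul_eq_mul]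
    _ = _ := by
      rw [Measure.volumeIoiPow, lintegral_withDensity_eq_lintegral_mul _
        ((measurable_subtype_coe.pow_const _).ennreal_ofReal)
        (g := fun t : Set.Ioi (0:ℝ) => f t.1) (by fun_prop)]
      rw [show ((fun r : Set.Ioi (0:ℝ) => ENNReal.ofReal (r.1 ^ (Module.finrank ℝ (Eucl n) - 1))) *
          fun t : Set.Ioi (0:ℝ) => f t.1) = fun t : Set.Ioi (0:ℝ) =>
          ENNReal.ofReal (t.1 ^ (n - 1)) * f t.1 by rw [hdim]; rfl]
      exact congrArg _ (lintegral_subtype_comap measurableSet_Ioi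
        (fun t => ENNReal.ofReal (t ^ (n-1)) * f t))

lemma norm_preimage_null (hn : 1 ≤ n) {s : Set ℝ} (hsub : s ⊆ Set.Ioi 0)
    (hs : volume s = 0) : volume {x : Eucl n | ‖x‖ ∈ s} = 0 := by
  set m : Set ℝ := toMeasurable volume s ∩ Set.Ioi 0 with hm
  have hmmeas : MeasurableSet m := (measurableSet_toMeasurable _ _).inter measurableSet_Ioi
  have hmnull : volume m = 0 := by
    refine measure_mono_null Set.inter_subset_left ?_
    rw [measure_toMeasurable]; exact hs
  have hsm : s ⊆ m := Set.subset_inter (subset_toMeasurable _ _) hsub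
  have key := lintegral_norm_polar (n := n) hn (m.indicator 1)
    ((measurable_one).indicator hmmeas)
  have hrhs : ∫⁻ t in Set.Ioi (0:ℝ), ENNReal.ofReal (t ^ (n-1)) * m.indicator 1 t = 0 := by
    rw [lintegral_eq_zero_iff (by measurability)]
    have h0 : ∀ᵐ t ∂(volume.restrict (Set.Ioi (0:ℝ))), t ∉ m :=
      ae_restrict_of_ae (measure_eq_zero_iff_ae_notMem.1 hmnull)
    filter_upwards [h0] with t ht
    simp [Set.indicator_of_notMem ht]
  have hlhs : ∫⁻ x : Eucl n, m.indicator 1 ‖x‖ = volume {x : Eucl n | ‖x‖ ∈ m} := by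
    have heq : ∀ x : Eucl n, m.indicator (1 : ℝ → ℝ≥0∞) ‖x‖ =
        ({x : Eucl n | ‖x‖ ∈ m}).indicator (1 : Eucl n → ℝ≥0∞) x := by
      intro x
      by_cases h : ‖x‖ ∈ m
      · rw [Set.indicator_of_mem h, Set.indicator_of_mem (by exact h)]; rfl
      · rw [Set.indicator_of_notMem h, Set.indicator_of_notMem (by exact h)]
    rw [lintegral_congr heq,
      lintegral_indicator_one (show MeasurableSet {x : Eucl n | ‖x‖ ∈ m} from measurable_norm hmmeas)]
  refine measure_mono_null (fun x hx => hsm hx) ?_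
  have : volume {x : Eucl n | ‖x‖ ∈ m} = 0 := by
    rw [← hlhs, key, hrhs, mul_zero]
  exact this

lemma lintegral_norm_polar' (hn : 1 ≤ n) (f : ℝ → ℝ≥0∞)
    (hf : AEMeasurable f (volume.restrict (Set.Ioi (0:ℝ)))) :
    ∫⁻ x : Eucl n, f ‖x‖ =
      (volume : Measure (Eucl n)).toSphere Set.univ *
        ∫⁻ t in Set.Ioi (0:ℝ), ENNReal.ofReal (t ^ (n-1)) * f t := by
  haveI := eucl_nontrivial hn
  obtain ⟨g₀, hg₀, heq⟩ := hf
  have hbad : volume ({t : ℝ | f t ≠ g₀ t} ∩ Set.Ioi 0) = 0 := by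
    have := heq
    rw [Filter.EventuallyEq, ae_iff, Measure.restrict_apply' measurableSet_Ioi] at this
    exact this
  have h1 : ∫⁻ x : Eucl n, f ‖x‖ = ∫⁻ x : Eucl n, g₀ ‖x‖ := by
    refine lintegral_congr_ae ?_
    have hpre := norm_preimage_null (n := n) hn
      (Set.inter_subset_right : {t : ℝ | f t ≠ g₀ t} ∩ Set.Ioi 0 ⊆ Set.Ioi 0) hbad
    have hz : volume ({(0 : Eucl n)} : Set (Eucl n)) = 0 := measure_singleton _
    rw [Filter.EventuallyEq, ae_iff]
    refine measure_mono_null (fun x hx => ?_) (measure_union_null hpre hz)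
    by_cases h0 : x = 0
    · exact Or.inr (by simp [h0])
    · exact Or.inl ⟨hx, norm_pos_iff.2 h0⟩
  have h2 : ∫⁻ t in Set.Ioi (0:ℝ), ENNReal.ofReal (t ^ (n-1)) * f t
      = ∫⁻ t in Set.Ioi (0:ℝ), ENNReal.ofReal (t ^ (n-1)) * g₀ t := by
    refine lintegral_congr_ae ?_
    filter_upwards [heq] with t ht
    rw [ht]
  rw [h1, h2]
  exact lintegral_norm_polar hn g₀ hg₀

lemma rhob_aesm (hn : 1 ≤ n) (ρ : Eucl n → ℝ) (ρb : ℝ → ℝ) (hrad : ∀ x, ρ x = ρb ‖x‖)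
    (hloc : AEStronglyMeasurable ρ (volume : Measure (Eucl n))) :
    AEStronglyMeasurable ρb (volume.restrict (Set.Ioi (0:ℝ))) := by
  haveI := eucl_nontrivial hn
  have hs : MeasurableSet ({0}ᶜ : Set (Eucl n)) := (measurableSet_singleton _).compl
  have h2 : AEStronglyMeasurable (fun x : ({0}ᶜ : Set (Eucl n)) => ρ x.1)
      ((volume : Measure (Eucl n)).comap (↑)) := by
    have := ((MeasurableEmbedding.subtype_coe hs).aestronglyMeasurable_map_iff
      (μ := (volume : Measure (Eucl n)).comap (↑)) (g := ρ)).1 ?_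
    · exact this
    · rw [(MeasurableEmbedding.subtype_coe hs).map_comap, Subtype.range_coe]
      exact hloc.restrict
  have h3 : AEStronglyMeasurable
      (fun p : Metric.sphere (0 : Eucl n) 1 × Set.Ioi (0:ℝ) => ρb p.2.1)
      ((volume : Measure (Eucl n)).toSphere.prod
        (Measure.volumeIoiPow (Module.finrank ℝ (Eucl n) - 1))) := by
    refine ((Measure.measurePreserving_homeomorphUnitSphereProd
      (volume : Measure (Eucl n))).aestronglyMeasurable_comp_iff
      (Homeomorph.measurableEmbedding _)).1 ?_
    exact h2.congr (Filter.Eventually.of_forall fun x => by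
      show ρ x.1 = ρb ((homeomorphUnitSphereProd (Eucl n) x).2.1)
      rw [hrad x.1, homeomorphUnitSphereProd_apply_snd_coe])
  have h4 := h3.prodMk_left
  have hpos : (volume : Measure (Eucl n)).toSphere ≠ 0 := by
    rw [← Measure.measure_univ_ne_zero, Measure.toSphere_apply_univ]
    have h1 : (0:ℝ≥0∞) < Module.finrank ℝ (Eucl n) := by
      rw [finrank_euclideanSpace_fin]
      exact_mod_cast Nat.pos_of_ne_zero (by omega)
    exact (ENNReal.mul_pos h1.ne' (measure_ball_pos _ _ one_pos).ne').ne'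
  haveI : (ae ((volume : Measure (Eucl n)).toSphere)).NeBot := ae_neBot.2 hpos
  obtain ⟨v, hv⟩ := h4.exists
  -- transfer from volumeIoiPow to comap
  have hac : (Measure.comap (Subtype.val : Set.Ioi (0:ℝ) → ℝ) volume) ≪
      Measure.volumeIoiPow (Module.finrank ℝ (Eucl n) - 1) := by
    refine Measure.AbsolutelyContinuous.mk fun s hsm h0 => ?_
    rw [Measure.volumeIoiPow, withDensity_apply _ hsm] at h0
    rw [lintegral_eq_zero_iff ((measurable_subtype_coe.pow_const _).ennreal_ofReal)] at h0
    rw [Filter.EventuallyEq, ae_iff] at h0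
    have huniv : {t : Set.Ioi (0:ℝ) | ¬ ENNReal.ofReal (t.1 ^ (Module.finrank ℝ (Eucl n) - 1))
        = (0 : Set.Ioi (0:ℝ) → ℝ≥0∞) t} = Set.univ := by
      ext t
      simp only [Set.mem_setOf_eq, Set.mem_univ, iff_true, Pi.zero_apply]
      exact (ENNReal.ofReal_pos.2 (pow_pos t.2 _)).ne'
    rw [huniv, Measure.restrict_apply_univ] at h0
    exact h0
  have h6 : AEStronglyMeasurable (fun t : Set.Ioi (0:ℝ) => ρb t.1)
      (Measure.comap (Subtype.val : Set.Ioi (0:ℝ) → ℝ) volume) := hv.mono_ac hac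
  have h7 := ((MeasurableEmbedding.subtype_coe measurableSet_Ioi).aestronglyMeasurable_map_iff
    (g := ρb)).2 h6
  rwa [(MeasurableEmbedding.subtype_coe measurableSet_Ioi).map_comap, Subtype.range_coe] at h7


lemma lintegral_swap_key (w g' : ℝ → ℝ≥0∞) (hw : Measurable w) (hwfin : ∀ r, w r ≠ ⊤)
    (hg : AEMeasurable g' (volume.restrict (Set.Ioi (0:ℝ))))
    {s : Set ℝ} (hs : MeasurableSet s) (hsub : s ⊆ Set.Ioi 0) :
    ∫⁻ r in s, w r * (∫⁻ t in Set.Ioi r, g' t) =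
      ∫⁻ t in Set.Ioi (0:ℝ), (∫⁻ r in s ∩ Set.Iio t, w r) * g' t := by
  set H : ℝ → ℝ → ℝ≥0∞ := fun r t => w r * ({q : ℝ × ℝ | q.1 < q.2}.indicator
    (fun q => g' q.2) (r, t)) with hH
  have hmeasH : AEMeasurable (Function.uncurry H)
      ((volume.restrict s).prod (volume.restrict (Set.Ioi (0:ℝ)))) := by
    obtain ⟨g₀, hg₀, heq⟩ := hg
    have haeq : (fun q : ℝ × ℝ => g' q.2) =ᵐ[(volume.restrict s).prod
        (volume.restrict (Set.Ioi (0:ℝ)))] (fun q : ℝ × ℝ => g₀ q.2) := by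
      rw [Filter.EventuallyEq, ae_iff]
      refine measure_mono_null (fun q hq => ?_) (?_ :
        ((volume.restrict s).prod (volume.restrict (Set.Ioi (0:ℝ))))
          (Set.univ ×ˢ {t : ℝ | g' t ≠ g₀ t}) = 0)
      · exact ⟨Set.mem_univ _, hq⟩
      · rw [Measure.prod_prod]
        have : (volume.restrict (Set.Ioi (0:ℝ))) {t : ℝ | g' t ≠ g₀ t} = 0 := heq
        rw [this, mul_zero]
    have : AEMeasurable (fun q : ℝ × ℝ => g' q.2)
        ((volume.restrict s).prod (volume.restrict (Set.Ioi (0:ℝ)))) :=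
      AEMeasurable.congr (hg₀.comp measurable_snd).aemeasurable haeq.symm
    exact ((hw.comp measurable_fst).aemeasurable).mul
      (this.indicator (measurableSet_lt measurable_fst measurable_snd))
  calc
    ∫⁻ r in s, w r * (∫⁻ t in Set.Ioi r, g' t)
        = ∫⁻ r in s, ∫⁻ t in Set.Ioi (0:ℝ), H r t := by
      refine lintegral_congr_ae ?_
      filter_upwards [ae_restrict_mem hs] with r hr
      have h1 : ∫⁻ t in Set.Ioi (0:ℝ), H r t
          = w r * ∫⁻ t in Set.Ioi (0:ℝ), {q : ℝ × ℝ | q.1 < q.2}.indicator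
            (fun q => g' q.2) (r, t) := by
        rw [← lintegral_const_mul' _ _ (hwfin r)]
      rw [h1]
      congr 1
      have h2 : (fun t : ℝ => {q : ℝ × ℝ | q.1 < q.2}.indicator (fun q => g' q.2) (r, t))
          = (Set.Ioi r).indicator g' := by
        funext t
        by_cases h : r < t
        · rw [Set.indicator_of_mem (by exact h), Set.indicator_of_mem (by exact h)]
        · rw [Set.indicator_of_notMem (by exact h), Set.indicator_of_notMem (by exact h)]
      rw [h2, lintegral_indicator measurableSet_Ioi, Measure.restrict_restrict measurableSet_Ioi,
        Set.inter_eq_left.2 (Set.Ioi_subset_Ioi (le_of_lt (hsub hr)))]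
    _ = ∫⁻ t in Set.Ioi (0:ℝ), ∫⁻ r in s, H r t := lintegral_lintegral_swap hmeasH
    _ = ∫⁻ t in Set.Ioi (0:ℝ), (∫⁻ r in s ∩ Set.Iio t, w r) * g' t := by
      refine lintegral_congr_ae (ae_of_all _ fun t => ?_)
      show ∫⁻ r in s, H r t = (∫⁻ r in s ∩ Set.Iio t, w r) * g' t
      have h3 : (fun r => H r t) = fun r => ((Set.Iio t).indicator w r) * g' t := by
        funext r
        by_cases h : r < t
        · rw [hH]
          simp only
          rw [Set.indicator_of_mem (by exact h), Set.indicator_of_mem (by exact h)]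
        · rw [hH]
          simp only
          rw [Set.indicator_of_notMem (by exact h), Set.indicator_of_notMem (by exact h),
            mul_zero, zero_mul]
      rw [h3, lintegral_mul_const'' _ ((hw.indicator measurableSet_Iio).aemeasurable)]
      congr 1
      rw [lintegral_indicator measurableSet_Iio, Measure.restrict_restrict measurableSet_Iio,
        Set.inter_comm]


section Main

variable {n : ℕ} {ρ : Eucl n → ℝ} {ρb : ℝ → ℝ}

-- nonnegativity of the radial profile
lemma rhob_nonneg (hn : 1 ≤ n) (hrad : ∀ x, ρ x = ρb ‖x‖) (hnn : ∀ x, 0 ≤ ρ x) :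
    ∀ t : ℝ, 0 ≤ t → 0 ≤ ρb t := by
  intro t ht
  set e : Eucl n := EuclideanSpace.single (⟨0, by omega⟩ : Fin n) (1:ℝ) with he
  have hne : ‖t • e‖ = t := by
    rw [norm_smul, he, EuclideanSpace.norm_single]
    simp [abs_of_nonneg ht]
  have := hnn (t • e)
  rwa [hrad (t • e), hne] at this

lemma min_inv_mul (t : ℝ) (ht : 0 < t) : min 1 t⁻¹ * ρb t = min t 1 * (ρb t / t) := by
  rcases le_total t 1 with h | h
  · rw [min_eq_left h, min_eq_left (by rw [le_inv_comm₀ one_pos ht]; simpa using h)]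
    field_simp
  · rw [min_eq_right h, min_eq_right (by rw [inv_le_comm₀ ht one_pos]; simpa using h)]
    field_simp

lemma toSphere_univ_ne_zero (hn : 1 ≤ n) :
    (volume : Measure (Eucl n)).toSphere Set.univ ≠ 0 := by
  haveI := eucl_nontrivial hn
  rw [Measure.toSphere_apply_univ]
  have h1 : (0:ℝ≥0∞) < Module.finrank ℝ (Eucl n) := by
    rw [finrank_euclideanSpace_fin]
    exact_mod_cast Nat.pos_of_ne_zero (by omega)
  exact (ENNReal.mul_pos h1.ne' (measure_ball_pos _ _ one_pos).ne').ne'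

lemma low_a (hn : 1 ≤ n) {r t : ℝ} (hr : 0 < r) (ht : r < t) :
    min r 1 ^ n ≤ t ^ (n-1) * min t 1 := by
  have h0 : (0:ℝ) ≤ min r 1 := le_min hr.le zero_le_one
  have h1 : min r 1 ≤ min t 1 := min_le_min ht.le le_rfl
  have h2 : min r 1 ^ (n-1) ≤ t ^ (n-1) :=
    pow_le_pow_left₀ h0 (h1.trans (min_le_left _ _)) _
  calc min r 1 ^ n = min r 1 ^ (n-1) * min r 1 := by
        rw [← pow_succ, Nat.sub_add_cancel hn]
    _ ≤ t ^ (n-1) * min t 1 := mul_le_mul h2 h1 h0 (pow_nonneg (hr.le.trans ht.le) _)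

lemma low_b {M r t : ℝ} (hM : 0 < M) (hMr : M ≤ r) (hr : 0 < r) (ht : r < t) :
    min M 1 * r ^ (n-1) ≤ t ^ (n-1) * min t 1 := by
  have h1 : min M 1 ≤ min t 1 := min_le_min (hMr.trans ht.le) le_rfl
  have h2 : r ^ (n-1) ≤ t ^ (n-1) := pow_le_pow_left₀ hr.le ht.le _
  calc min M 1 * r ^ (n-1) ≤ min t 1 * t ^ (n-1) :=
        mul_le_mul h1 h2 (pow_nonneg hr.le _) (le_min (hM.trans_le (hMr.trans ht.le)).le zero_le_one)
    _ = t ^ (n-1) * min t 1 := mul_comm _ _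

lemma Fprime_le (hnn : ∀ t : ℝ, 0 ≤ t → 0 ≤ ρb t) {c r : ℝ} (hc : 0 < c) (hr : 0 < r)
    (hlow : ∀ t, r < t → c ≤ t ^ (n-1) * min t 1) :
    ∫⁻ t in Set.Ioi r, ENNReal.ofReal (ρb t / t) ≤
      ENNReal.ofReal c⁻¹ * ∫⁻ t in Set.Ioi (0:ℝ),
        ENNReal.ofReal (t ^ (n-1)) * ENNReal.ofReal (min 1 t⁻¹ * ρb t) := by
  calc ∫⁻ t in Set.Ioi r, ENNReal.ofReal (ρb t / t)
      ≤ ∫⁻ t in Set.Ioi r, ENNReal.ofReal c⁻¹ *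
          (ENNReal.ofReal (t ^ (n-1)) * ENNReal.ofReal (min 1 t⁻¹ * ρb t)) := by
        refine lintegral_mono_ae ?_
        filter_upwards [ae_restrict_mem measurableSet_Ioi] with t ht
        have htpos : (0:ℝ) < t := lt_trans hr ht
        have hg0 : 0 ≤ ρb t / t := div_nonneg (hnn t htpos.le) htpos.le
        have key : c * (ρb t / t) ≤ t ^ (n-1) * (min 1 t⁻¹ * ρb t) := by
          rw [min_inv_mul t htpos, ← mul_assoc]
          exact mul_le_mul_of_nonneg_right (hlow t ht) hg0
        have key2 : ρb t / t ≤ c⁻¹ * (t ^ (n-1) * (min 1 t⁻¹ * ρb t)) := by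
          rw [le_inv_mul_iff₀ hc]
          exact key
        calc ENNReal.ofReal (ρb t / t)
            ≤ ENNReal.ofReal (c⁻¹ * (t ^ (n-1) * (min 1 t⁻¹ * ρb t))) :=
              ENNReal.ofReal_le_ofReal key2
          _ = ENNReal.ofReal c⁻¹ *
              (ENNReal.ofReal (t ^ (n-1)) * ENNReal.ofReal (min 1 t⁻¹ * ρb t)) := by
            rw [ENNReal.ofReal_mul (inv_nonneg.2 hc.le),
              ENNReal.ofReal_mul (pow_nonneg htpos.le _)]
    _ = ENNReal.ofReal c⁻¹ * ∫⁻ t in Set.Ioi r,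
          ENNReal.ofReal (t ^ (n-1)) * ENNReal.ofReal (min 1 t⁻¹ * ρb t) :=
        lintegral_const_mul' _ _ ENNReal.ofReal_ne_top
    _ ≤ _ := by
      refine mul_le_mul_right (lintegral_mono' (Measure.restrict_mono
        (Set.Ioi_subset_Ioi hr.le) le_rfl) le_rfl) _

lemma Tfin (hn : 1 ≤ n) (hrad : ∀ x, ρ x = ρb ‖x‖)
    (hintMin : Integrable (fun x : Eucl n => min 1 ‖x‖⁻¹ * ρ x))
    (haesm : AEStronglyMeasurable ρb (volume.restrict (Set.Ioi (0:ℝ)))) :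
    ∫⁻ t in Set.Ioi (0:ℝ),
      ENNReal.ofReal (t ^ (n-1)) * ENNReal.ofReal (min 1 t⁻¹ * ρb t) < ⊤ := by
  have h1 := hintMin.lintegral_lt_top
  have hmeas : AEMeasurable (fun t : ℝ => ENNReal.ofReal (min 1 t⁻¹ * ρb t))
      (volume.restrict (Set.Ioi (0:ℝ))) :=
    ((aemeasurable_const.min (measurable_inv.aemeasurable)).mul
      haesm.aemeasurable).ennreal_ofReal
  have h2 : (fun x : Eucl n => ENNReal.ofReal (min 1 ‖x‖⁻¹ * ρ x))
      = fun x : Eucl n => (fun t : ℝ => ENNReal.ofReal (min 1 t⁻¹ * ρb t)) ‖x‖ :=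
    funext fun x => by rw [hrad]
  rw [show ∫⁻ x : Eucl n, ENNReal.ofReal (min 1 ‖x‖⁻¹ * ρ x) =
      ∫⁻ x : Eucl n, (fun t : ℝ => ENNReal.ofReal (min 1 t⁻¹ * ρb t)) ‖x‖ from by rw [← h2],
    lintegral_norm_polar' hn _ hmeas] at h1
  exact ENNReal.lt_top_of_mul_ne_top_right h1.ne (toSphere_univ_ne_zero hn)


end Main


section Main2

variable {n : ℕ} {ρ : Eucl n → ℝ} {ρb : ℝ → ℝ}

lemma Fprime_antitone : Antitone (fun r => ∫⁻ t in Set.Ioi r, ENNReal.ofReal (ρb t / t)) :=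
  fun _ _ hab => lintegral_mono' (Measure.restrict_mono (Set.Ioi_subset_Ioi hab) le_rfl) le_rfl

lemma Fprime_fin (hn : 1 ≤ n) (hnn : ∀ t : ℝ, 0 ≤ t → 0 ≤ ρb t)
    (hT : ∫⁻ t in Set.Ioi (0:ℝ),
      ENNReal.ofReal (t ^ (n-1)) * ENNReal.ofReal (min 1 t⁻¹ * ρb t) < ⊤)
    {r : ℝ} (hr : 0 < r) :
    ∫⁻ t in Set.Ioi r, ENNReal.ofReal (ρb t / t) < ⊤ := by
  have h0 : (0:ℝ) < min r 1 ^ n := pow_pos (lt_min hr one_pos) _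
  refine (Fprime_le hnn h0 hr (fun t ht => low_a hn hr ht)).trans_lt ?_
  exact ENNReal.mul_lt_top ENNReal.ofReal_lt_top hT

lemma g_nonneg_ae (hnn : ∀ t : ℝ, 0 ≤ t → 0 ≤ ρb t) {r : ℝ} (hr : 0 ≤ r) :
    0 ≤ᵐ[volume.restrict (Set.Ioi r)] fun t => ρb t / t := by
  filter_upwards [ae_restrict_mem measurableSet_Ioi] with t ht
  have : (0:ℝ) < t := lt_of_le_of_lt hr ht
  exact div_nonneg (hnn t this.le) this.le

lemma g_aesm (haesm : AEStronglyMeasurable ρb (volume.restrict (Set.Ioi (0:ℝ))))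
    {r : ℝ} (hr : 0 < r) :
    AEStronglyMeasurable (fun t => ρb t / t) (volume.restrict (Set.Ioi r)) := by
  have h1 : AEStronglyMeasurable ρb (volume.restrict (Set.Ioi r)) :=
    haesm.mono_measure (Measure.restrict_mono (Set.Ioi_subset_Ioi hr.le) le_rfl)
  have h2 : AEStronglyMeasurable (fun t : ℝ => t⁻¹) (volume.restrict (Set.Ioi r)) :=
    measurable_inv.aestronglyMeasurable
  simp only [div_eq_mul_inv]
  exact h1.mul h2

lemma g_integrableOn (hn : 1 ≤ n) (hnn : ∀ t : ℝ, 0 ≤ t → 0 ≤ ρb t)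
    (haesm : AEStronglyMeasurable ρb (volume.restrict (Set.Ioi (0:ℝ))))
    (hT : ∫⁻ t in Set.Ioi (0:ℝ),
      ENNReal.ofReal (t ^ (n-1)) * ENNReal.ofReal (min 1 t⁻¹ * ρb t) < ⊤)
    {r : ℝ} (hr : 0 < r) :
    IntegrableOn (fun t => ρb t / t) (Set.Ioi r) :=
  ⟨g_aesm haesm hr, (hasFiniteIntegral_iff_ofReal (g_nonneg_ae hnn hr.le)).2
    (Fprime_fin hn hnn hT hr)⟩

lemma Qker_eq (haesm : AEStronglyMeasurable ρb (volume.restrict (Set.Ioi (0:ℝ))))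
    (hnn : ∀ t : ℝ, 0 ≤ t → 0 ≤ ρb t) {x : Eucl n} (hx : x ≠ 0) :
    Qker n ρb x = (∫⁻ t in Set.Ioi ‖x‖, ENNReal.ofReal (ρb t / t)).toReal :=
  integral_eq_lintegral_of_nonneg_ae (g_nonneg_ae hnn (norm_nonneg x))
    (g_aesm haesm (norm_pos_iff.2 hx))

lemma Qker_nonneg (hnn : ∀ t : ℝ, 0 ≤ t → 0 ≤ ρb t) (x : Eucl n) : 0 ≤ Qker n ρb x :=
  setIntegral_nonneg measurableSet_Ioi fun t ht =>
    div_nonneg (hnn t (le_of_lt (lt_of_le_of_lt (norm_nonneg x) ht)))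
      (le_of_lt (lt_of_le_of_lt (norm_nonneg x) ht))

lemma Qker_aesm (hn : 1 ≤ n)
    (haesm : AEStronglyMeasurable ρb (volume.restrict (Set.Ioi (0:ℝ))))
    (hnn : ∀ t : ℝ, 0 ≤ t → 0 ≤ ρb t) :
    AEStronglyMeasurable (Qker n ρb) (volume : Measure (Eucl n)) := by
  haveI := eucl_nontrivial hn
  have hmeasF : Measurable fun r : ℝ =>
      (∫⁻ t in Set.Ioi r, ENNReal.ofReal (ρb t / t)).toReal :=
    (Fprime_antitone.measurable).ennreal_toReal
  refine ((hmeasF.comp measurable_norm).aestronglyMeasurable).congr ?_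
  rw [Filter.EventuallyEq, ae_iff]
  refine measure_mono_null (fun x hx => ?_) (measure_singleton (0 : Eucl n))
  by_contra h0
  exact hx ((Qker_eq haesm hnn h0).symm)

lemma eucl_exists_norm_eq (hn : 1 ≤ n) {t : ℝ} (ht : 0 ≤ t) : ∃ y : Eucl n, ‖y‖ = t :=
  ⟨t • EuclideanSpace.single (⟨0, by omega⟩ : Fin n) (1:ℝ), by
    rw [norm_smul, EuclideanSpace.norm_single]
    simp [abs_of_nonneg ht]⟩

lemma min_pow_le (hn : 1 ≤ n) {b t : ℝ} (hb : 0 < b) (ht : 0 < t) :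
    min b t ^ n ≤ (b+1)^n * (t^(n-1) * min t 1) := by
  have hmbt : (0:ℝ) ≤ min b t := le_min hb.le ht.le
  have hb1 : (1:ℝ) ≤ (b+1)^n := one_le_pow₀ (by linarith)
  rcases le_total t 1 with h | h
  · rw [min_eq_left h]
    have h1 : min b t ^ n ≤ t ^ n := pow_le_pow_left₀ hmbt (min_le_right _ _) _
    have h2 : t^(n-1) * t = t^n := by rw [← pow_succ, Nat.sub_add_cancel hn]
    rw [h2]
    nlinarith [pow_nonneg ht.le n]
  · rw [min_eq_right h]
    have h1 : min b t ^ (n-1) ≤ t ^ (n-1) := pow_le_pow_left₀ hmbt (min_le_right _ _) _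
    have h2 : min b t ^ n = min b t ^ (n-1) * min b t := by
      rw [← pow_succ, Nat.sub_add_cancel hn]
    have h3 : min b t ≤ (b+1)^n := (min_le_left _ _).trans
      ((by linarith : b ≤ b+1).trans (le_self_pow₀ (by linarith) (by omega)))
    rw [h2, mul_one]
    calc min b t ^ (n-1) * min b t ≤ t ^ (n-1) * (b+1)^n :=
          mul_le_mul h1 h3 hmbt (pow_nonneg ht.le _)
      _ = (b+1)^n * t^(n-1) := mul_comm _ _

end Main2

end AuxLemmas

/-- Lemma `le:Q`: basic properties of the potential `Q_ρ` under (H0):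
local integrability on balls, decay `|Q_ρ(x)| ≤ C/|x|^{n-1}` away from the origin, and
global integrability (with compact support) when `ρ ∈ L¹` (has compact support). -/
theorem Qker_integrability_and_decay
    {n : ℕ} (ρ : Eucl n → ℝ) (ρb : ℝ → ℝ) (ε : ℝ) (h0 : H0 n ρ ρb ε) :
    (∀ b : ℝ, 0 < b → IntegrableOn (Qker n ρb) (Metric.ball (0 : Eucl n) b)) ∧
    (∀ M : ℝ, 0 < M → ∃ C > 0, ∀ x : Eucl n, M ≤ ‖x‖ →
      |Qker n ρb x| ≤ C / ‖x‖ ^ ((n : ℝ) - 1)) ∧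
    (Integrable ρ →
      Integrable (Qker n ρb) ∧
      (HasCompactSupport ρ → HasCompactSupport (Qker n ρb))) := by
  rcases Nat.lt_or_ge n 1 with hn0 | hn
  · -- degenerate case `n = 0`
    have hne : n = 0 := by omega
    subst hne
    have hnorm : ∀ x : Eucl 0, ‖x‖ = 0 := fun x => by
      simp [EuclideanSpace.norm_eq]
    have hconst : ∀ x : Eucl 0, Qker 0 ρb x = Qker 0 ρb 0 := fun x => by
      unfold Qker
      rw [hnorm x, hnorm 0]
    have haeconst : (fun _ : Eucl 0 => Qker 0 ρb 0) =ᵐ[(volume : Measure (Eucl 0))]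
        Qker 0 ρb := Filter.Eventually.of_forall fun x => (hconst x).symm
    refine ⟨?_, ?_, ?_⟩
    · intro b hb
      exact (integrableOn_const measure_ball_lt_top.ne).congr
        (ae_restrict_of_ae haeconst)
    · intro M hM
      refine ⟨1, one_pos, fun x hx => absurd (hx.trans_eq (hnorm x)) (by linarith)⟩
    · intro _
      haveI : IsFiniteMeasure (volume : Measure (Eucl 0)) := by
        refine ⟨lt_of_le_of_lt (measure_mono (fun x _ => ?_)) (measure_ball_lt_top
          (x := (0 : Eucl 0)) (r := 1))⟩
        rw [Metric.mem_ball, dist_zero_right, hnorm x]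
        exact one_pos
      refine ⟨(integrable_const (Qker 0 ρb 0)).congr haeconst, fun _ => ?_⟩
      refine HasCompactSupport.intro (isCompact_closedBall (0 : Eucl 0) 1) fun x hx => ?_
      exact absurd (by rw [Metric.mem_closedBall, dist_zero_right, hnorm x]; exact zero_le_one) hx
  · -- main case `n ≥ 1`
    haveI := eucl_nontrivial hn
    have hrad := h0.radial
    have haesm : AEStronglyMeasurable ρb (volume.restrict (Set.Ioi (0:ℝ))) :=
      rhob_aesm hn ρ ρb hrad h0.locInt.aestronglyMeasurable
    have hnn : ∀ t : ℝ, 0 ≤ t → 0 ≤ ρb t := rhob_nonneg hn hrad h0.nonneg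
    have hT := Tfin hn hrad h0.intMin haesm
    have hc0 : (volume : Measure (Eucl n)).toSphere Set.univ ≠ 0 := toSphere_univ_ne_zero hn
    have hcT : (volume : Measure (Eucl n)).toSphere Set.univ ≠ ⊤ := measure_ne_top _ _
    have hg'meas : AEMeasurable (fun t : ℝ => ENNReal.ofReal (ρb t / t))
        (volume.restrict (Set.Ioi (0:ℝ))) :=
      (haesm.aemeasurable.div aemeasurable_id).ennreal_ofReal
    have hwmeas : Measurable fun r : ℝ => ENNReal.ofReal (r ^ (n-1)) :=
      (measurable_id.pow_const _).ennreal_ofReal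
    have hae_le : ∀ᵐ x ∂(volume : Measure (Eucl n)), ENNReal.ofReal (Qker n ρb x) ≤
        ∫⁻ t in Set.Ioi ‖x‖, ENNReal.ofReal (ρb t / t) := by
      rw [ae_iff]
      refine measure_mono_null (fun x hx => ?_) (measure_singleton (0 : Eucl n))
      by_contra hx0
      refine hx ?_
      rw [Qker_eq haesm hnn hx0]
      exact ENNReal.ofReal_toReal_le
    -- the inner-integral bound used in both Fubini applications
    have hinner : ∀ (s : Set ℝ), MeasurableSet s → ∀ (u t : ℝ), 0 < u →
        s ∩ Set.Iio t ⊆ Set.Ioo 0 u →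
        (∫⁻ r in s ∩ Set.Iio t, ENNReal.ofReal (r ^ (n-1))) ≤
          ENNReal.ofReal (u ^ (n-1)) * ENNReal.ofReal u := by
      intro s hs u t hu hsub
      calc (∫⁻ r in s ∩ Set.Iio t, ENNReal.ofReal (r ^ (n-1)))
          ≤ ∫⁻ r in s ∩ Set.Iio t, ENNReal.ofReal (u ^ (n-1)) := by
            refine lintegral_mono_ae ?_
            filter_upwards [ae_restrict_mem (hs.inter measurableSet_Iio)] with r hr
            exact ENNReal.ofReal_le_ofReal
              (pow_le_pow_left₀ (hsub hr).1.le (hsub hr).2.le _)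
        _ = ENNReal.ofReal (u ^ (n-1)) * volume (s ∩ Set.Iio t) := setLIntegral_const _ _
        _ ≤ ENNReal.ofReal (u ^ (n-1)) * ENNReal.ofReal u := by
            refine mul_le_mul_right ?_ _
            refine le_trans (measure_mono hsub) ?_
            rw [Real.volume_Ioo]
            exact ENNReal.ofReal_le_ofReal (by linarith)
    refine ⟨?_, ?_, ?_⟩
    · -- part (i)
      intro b hb
      refine ⟨(Qker_aesm hn haesm hnn).restrict, ?_⟩
      rw [hasFiniteIntegral_iff_ofReal (ae_restrict_of_ae (ae_of_all _ (Qker_nonneg hnn)))]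
      set F' : ℝ → ℝ≥0∞ := fun r => ∫⁻ t in Set.Ioi r, ENNReal.ofReal (ρb t / t) with hF'
      have step2 : ∫⁻ x in Metric.ball (0 : Eucl n) b, F' ‖x‖
          = ∫⁻ x : Eucl n, ((Set.Iio b).indicator F') ‖x‖ := by
        rw [← lintegral_indicator measurableSet_ball]
        refine lintegral_congr fun x => ?_
        by_cases hx : ‖x‖ < b
        · rw [Set.indicator_of_mem (mem_ball_zero_iff.2 hx),
            Set.indicator_of_mem (by exact hx)]
        · rw [Set.indicator_of_notMem (fun h => hx (mem_ball_zero_iff.1 h)),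
            Set.indicator_of_notMem (by exact hx)]
      have hGmeas : Measurable ((Set.Iio b).indicator F') :=
        (Fprime_antitone.measurable).indicator measurableSet_Iio
      have step4 : ∫⁻ t in Set.Ioi (0:ℝ), ENNReal.ofReal (t^(n-1)) * ((Set.Iio b).indicator F') t
          = ∫⁻ r in Set.Ioo 0 b, ENNReal.ofReal (r^(n-1)) * F' r := by
        have hind : (fun t : ℝ => ENNReal.ofReal (t^(n-1)) * ((Set.Iio b).indicator F') t)
            = (Set.Iio b).indicator (fun t => ENNReal.ofReal (t^(n-1)) * F' t) := by
          funext t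
          by_cases h : t ∈ Set.Iio b
          · rw [Set.indicator_of_mem h, Set.indicator_of_mem h]
          · rw [Set.indicator_of_notMem h, Set.indicator_of_notMem h, mul_zero]
        rw [hind, lintegral_indicator measurableSet_Iio,
          Measure.restrict_restrict measurableSet_Iio, Set.Iio_inter_Ioi]
      have step5 := lintegral_swap_key (fun r => ENNReal.ofReal (r^(n-1)))
        (fun t => ENNReal.ofReal (ρb t / t)) hwmeas (fun r => ENNReal.ofReal_ne_top)
        hg'meas measurableSet_Ioo (Set.Ioo_subset_Ioi_self (b := (0:ℝ)) (a := b))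
      have step6 : ∫⁻ t in Set.Ioi (0:ℝ),
          (∫⁻ r in Set.Ioo 0 b ∩ Set.Iio t, ENNReal.ofReal (r^(n-1))) *
            ENNReal.ofReal (ρb t / t)
          ≤ ENNReal.ofReal ((b+1)^n) * ∫⁻ t in Set.Ioi (0:ℝ),
              ENNReal.ofReal (t^(n-1)) * ENNReal.ofReal (min 1 t⁻¹ * ρb t) := by
        rw [← lintegral_const_mul' _ _ ENNReal.ofReal_ne_top]
        refine lintegral_mono_ae ?_
        filter_upwards [ae_restrict_mem measurableSet_Ioi] with t ht
        have htpos : (0:ℝ) < t := ht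
        have hmpos : 0 < min b t := lt_min hb htpos
        have h1 : (∫⁻ r in Set.Ioo 0 b ∩ Set.Iio t, ENNReal.ofReal (r^(n-1)))
            ≤ ENNReal.ofReal (min b t ^ (n-1)) * ENNReal.ofReal (min b t) :=
          hinner _ measurableSet_Ioo (min b t) t hmpos
            (fun r hr => ⟨hr.1.1, lt_min hr.1.2 hr.2⟩)
        calc (∫⁻ r in Set.Ioo 0 b ∩ Set.Iio t, ENNReal.ofReal (r^(n-1))) *
              ENNReal.ofReal (ρb t / t)
            ≤ (ENNReal.ofReal (min b t ^ (n-1)) * ENNReal.ofReal (min b t)) *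
              ENNReal.ofReal (ρb t / t) := mul_le_mul_left h1 _
          _ = ENNReal.ofReal (min b t ^ n * (ρb t / t)) := by
              rw [← ENNReal.ofReal_mul (pow_nonneg hmpos.le _),
                ← ENNReal.ofReal_mul (by positivity)]
              congr 1
              rw [← pow_succ, Nat.sub_add_cancel hn]
          _ ≤ ENNReal.ofReal ((b+1)^n * (t^(n-1) * (min 1 t⁻¹ * ρb t))) := by
              refine ENNReal.ofReal_le_ofReal ?_
              have hkey : min b t ^ n ≤ (b+1)^n * (t^(n-1) * min t 1) := min_pow_le hn hb htpos
              have hq : 0 ≤ ρb t / t := div_nonneg (hnn t htpos.le) htpos.le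
              calc min b t ^ n * (ρb t / t)
                  ≤ ((b+1)^n * (t^(n-1) * min t 1)) * (ρb t / t) :=
                    mul_le_mul_of_nonneg_right hkey hq
                _ = (b+1)^n * (t^(n-1) * (min 1 t⁻¹ * ρb t)) := by
                    rw [min_inv_mul t htpos]; ring
          _ = ENNReal.ofReal ((b+1)^n) *
              (ENNReal.ofReal (t^(n-1)) * ENNReal.ofReal (min 1 t⁻¹ * ρb t)) := by
              rw [ENNReal.ofReal_mul (by positivity), ENNReal.ofReal_mul (by positivity)]
      calc ∫⁻ x in Metric.ball (0 : Eucl n) b, ENNReal.ofReal (Qker n ρb x)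
          ≤ ∫⁻ x in Metric.ball (0 : Eucl n) b, F' ‖x‖ :=
            lintegral_mono_ae (ae_restrict_of_ae hae_le)
        _ = ∫⁻ x : Eucl n, ((Set.Iio b).indicator F') ‖x‖ := step2
        _ = (volume : Measure (Eucl n)).toSphere Set.univ * ∫⁻ t in Set.Ioi (0:ℝ),
              ENNReal.ofReal (t^(n-1)) * ((Set.Iio b).indicator F') t :=
            lintegral_norm_polar hn _ hGmeas
        _ = (volume : Measure (Eucl n)).toSphere Set.univ *
              ∫⁻ r in Set.Ioo 0 b, ENNReal.ofReal (r^(n-1)) * F' r := by rw [step4]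
        _ = (volume : Measure (Eucl n)).toSphere Set.univ * ∫⁻ t in Set.Ioi (0:ℝ),
              (∫⁻ r in Set.Ioo 0 b ∩ Set.Iio t, ENNReal.ofReal (r^(n-1))) *
                ENNReal.ofReal (ρb t / t) := by rw [step5]
        _ ≤ (volume : Measure (Eucl n)).toSphere Set.univ * (ENNReal.ofReal ((b+1)^n) *
              ∫⁻ t in Set.Ioi (0:ℝ), ENNReal.ofReal (t^(n-1)) *
                ENNReal.ofReal (min 1 t⁻¹ * ρb t)) := mul_le_mul_right step6 _
        _ < ⊤ := ENNReal.mul_lt_top hcT.lt_top (ENNReal.mul_lt_top ENNReal.ofReal_lt_top hT)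
    · -- part (ii)
      intro M hM
      set T := ∫⁻ t in Set.Ioi (0:ℝ),
        ENNReal.ofReal (t^(n-1)) * ENNReal.ofReal (min 1 t⁻¹ * ρb t) with hTdef
      refine ⟨(T.toReal + 1) / min M 1, by positivity, fun x hx => ?_⟩
      have hr : (0:ℝ) < ‖x‖ := lt_of_lt_of_le hM hx
      have hx0 : x ≠ 0 := norm_pos_iff.1 hr
      have hMpos : (0:ℝ) < min M 1 := lt_min hM one_pos
      have hcpos : 0 < min M 1 * ‖x‖^(n-1) := by positivity
      have hub := Fprime_le hnn hcpos hr (fun t ht => low_b hM hx hr ht)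
      rw [abs_of_nonneg (Qker_nonneg hnn x), Qker_eq haesm hnn hx0]
      have h2 : (∫⁻ t in Set.Ioi ‖x‖, ENNReal.ofReal (ρb t / t)).toReal ≤
          (min M 1 * ‖x‖^(n-1))⁻¹ * T.toReal := by
        have h3 := ENNReal.toReal_mono (ENNReal.mul_ne_top ENNReal.ofReal_ne_top hT.ne) hub
        rwa [ENNReal.toReal_mul, ENNReal.toReal_ofReal (by positivity)] at h3
      refine h2.trans ?_
      have hrw : ‖x‖ ^ ((n:ℝ)-1) = ‖x‖ ^ (n-1 : ℕ) := by
        rw [← Real.rpow_natCast ‖x‖ (n-1)]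
        congr 1
        rw [Nat.cast_sub hn, Nat.cast_one]
      rw [hrw, div_div, inv_mul_eq_div]
      gcongr
      linarith
    · -- part (iii)
      intro hρint
      have hT2 : ∫⁻ t in Set.Ioi (0:ℝ),
          ENNReal.ofReal (t^(n-1)) * ENNReal.ofReal (ρb t) < ⊤ := by
        have h1 := hρint.lintegral_lt_top
        have hmeasr : AEMeasurable (fun t : ℝ => ENNReal.ofReal (ρb t))
            (volume.restrict (Set.Ioi (0:ℝ))) := haesm.aemeasurable.ennreal_ofReal
        rw [show (fun x : Eucl n => ENNReal.ofReal (ρ x))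
            = fun x : Eucl n => (fun t : ℝ => ENNReal.ofReal (ρb t)) ‖x‖ from
            funext fun x => by rw [hrad],
          lintegral_norm_polar' hn _ hmeasr] at h1
        exact ENNReal.lt_top_of_mul_ne_top_right h1.ne hc0
      constructor
      · refine ⟨Qker_aesm hn haesm hnn, ?_⟩
        rw [hasFiniteIntegral_iff_ofReal (ae_of_all _ (Qker_nonneg hnn))]
        set F' : ℝ → ℝ≥0∞ := fun r => ∫⁻ t in Set.Ioi r, ENNReal.ofReal (ρb t / t) with hF'
        have step5 := lintegral_swap_key (fun r => ENNReal.ofReal (r^(n-1)))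
          (fun t => ENNReal.ofReal (ρb t / t)) hwmeas (fun r => ENNReal.ofReal_ne_top)
          hg'meas measurableSet_Ioi (fun t ht => ht)
        have step6 : ∫⁻ t in Set.Ioi (0:ℝ),
            (∫⁻ r in Set.Ioi 0 ∩ Set.Iio t, ENNReal.ofReal (r^(n-1))) *
              ENNReal.ofReal (ρb t / t)
            ≤ ∫⁻ t in Set.Ioi (0:ℝ), ENNReal.ofReal (t^(n-1)) * ENNReal.ofReal (ρb t) := by
          refine lintegral_mono_ae ?_
          filter_upwards [ae_restrict_mem measurableSet_Ioi] with t ht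
          have htpos : (0:ℝ) < t := ht
          have h1 : (∫⁻ r in Set.Ioi 0 ∩ Set.Iio t, ENNReal.ofReal (r^(n-1)))
              ≤ ENNReal.ofReal (t^(n-1)) * ENNReal.ofReal t :=
            hinner _ measurableSet_Ioi t t htpos (fun r hr => ⟨hr.1, hr.2⟩)
          calc (∫⁻ r in Set.Ioi 0 ∩ Set.Iio t, ENNReal.ofReal (r^(n-1))) *
                ENNReal.ofReal (ρb t / t)
              ≤ (ENNReal.ofReal (t^(n-1)) * ENNReal.ofReal t) * ENNReal.ofReal (ρb t / t) :=
                mul_le_mul_left h1 _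
            _ = ENNReal.ofReal (t^(n-1)) * ENNReal.ofReal (ρb t) := by
                rw [mul_assoc, ← ENNReal.ofReal_mul htpos.le]
                congr 2
                field_simp
        calc ∫⁻ x : Eucl n, ENNReal.ofReal (Qker n ρb x)
            ≤ ∫⁻ x : Eucl n, F' ‖x‖ := lintegral_mono_ae hae_le
          _ = (volume : Measure (Eucl n)).toSphere Set.univ *
                ∫⁻ t in Set.Ioi (0:ℝ), ENNReal.ofReal (t^(n-1)) * F' t :=
              lintegral_norm_polar hn _ Fprime_antitone.measurable
          _ = (volume : Measure (Eucl n)).toSphere Set.univ * ∫⁻ t in Set.Ioi (0:ℝ),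
                (∫⁻ r in Set.Ioi 0 ∩ Set.Iio t, ENNReal.ofReal (r^(n-1))) *
                  ENNReal.ofReal (ρb t / t) := by rw [step5]
          _ ≤ (volume : Measure (Eucl n)).toSphere Set.univ *
                ∫⁻ t in Set.Ioi (0:ℝ), ENNReal.ofReal (t^(n-1)) * ENNReal.ofReal (ρb t) :=
              mul_le_mul_right step6 _
          _ < ⊤ := ENNReal.mul_lt_top hcT.lt_top hT2
      · intro hsupp
        obtain ⟨R, hR⟩ := hsupp.isBounded.subset_closedBall (0 : Eucl n)
        refine HasCompactSupport.intro (isCompact_closedBall (0 : Eucl n) R) fun x hx => ?_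
        have hRx : R < ‖x‖ := by
          by_contra h
          exact hx (mem_closedBall_zero_iff.2 (le_of_not_gt h))
        have hzero : Set.EqOn (fun t : ℝ => ρb t / t) (fun _ => (0:ℝ)) (Set.Ioi ‖x‖) := by
          intro t ht
          have htpos : (0:ℝ) < t := lt_of_le_of_lt (norm_nonneg x) ht
          obtain ⟨y, hy⟩ := eucl_exists_norm_eq hn htpos.le
          have hynot : y ∉ tsupport ρ := fun hmem => by
            have h5 := hR hmem
            rw [mem_closedBall_zero_iff, hy] at h5
            have : R < t := lt_trans hRx ht
            linarith
          have h6 : ρ y = 0 := image_eq_zero_of_notMem_tsupport hynot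
          rw [hrad y, hy] at h6
          show ρb t / t = 0
          rw [h6, zero_div]
        show (∫ t in Set.Ioi ‖x‖, ρb t / t) = 0
        rw [setIntegral_congr_fun measurableSet_Ioi hzero, integral_zero]


end
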